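/- Let X be a Borel subset of ℝ^m, Y a finite set, U a finite set, T a transition kernel from X×U to X and Q an observation kernel from X to Y, and let η be the associated belief transition kernel. Let δ(Q) = inf_{x,x'∈X} Σ_{y∈Y} min(Q(y|x), Q(y|x')) be the Dobrushin coefficient of Q, and let δ̃(T) = inf_{u∈U} δ(T(·|·,u)) where, for a Markov kernel K from X to X, δ(K) is the infimum over x, x' ∈ X and finite measurable partitions {A_1,…,A_n} of X of Σ_{i=1}^n min(K(A_i|x), K(A_i|x')). Then for every z, z' ∈ P(X), every u ∈ U, and every sequence (f_m)_{m≥1} of measurable functions f_m : X → ℝ with ‖f_m‖_∞ ≤ 1, one has ρ_BL^ρ(η(·|z,u), η(·|z',u)) ≤ (3 − 2δ(Q))(1 − δ̃(T)) ‖z − z'‖_TV. -/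

import Mathlib

open MeasureTheory

noncomputable section

/-- `‖f‖_BL ≤ c` with respect to the distance-like function `d`:
there are `a, b ≥ 0` with `a + b ≤ c` such that `f` is bounded by `a` and
`b`-Lipschitz with respect to `d`. -/
def blNormLE {S : Type*} (d : S → S → ℝ) (f : S → ℝ) (c : ℝ) : Prop :=
  ∃ a b : ℝ, 0 ≤ a ∧ 0 ≤ b ∧ a + b ≤ c ∧ (∀ x, |f x| ≤ a) ∧
    ∀ x y, |f x - f y| ≤ b * d x y

/-- Bounded-Lipschitz distance between two measures, induced by `d`. -/
def blDist {S : Type*} [MeasurableSpace S] (d : S → S → ℝ) (μ ν : Measure S) : ℝ :=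
  sSup {r | ∃ f : S → ℝ, Measurable f ∧ blNormLE d f 1 ∧
    r = |∫ x, f x ∂μ - ∫ x, f x ∂ν|}

/-- Total variation distance between two measures. -/
def tvDist {S : Type*} [MeasurableSpace S] (μ ν : Measure S) : ℝ :=
  sSup {r | ∃ f : S → ℝ, Measurable f ∧ (∀ x, |f x| ≤ 1) ∧
    r = |∫ x, f x ∂μ - ∫ x, f x ∂ν|}

variable {X Y U : Type*} [MeasurableSpace X] [Fintype Y]

/-- One-step push-forward `zT_u` of a belief `z` through the transition kernel `T`. -/
def beliefPush (T : X → U → Measure X) (z : Measure X) (u : U) : Measure X :=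
  z.bind fun x => T x u

/-- Predictive probability `P(y|z,u) = ∫ Q(y|x₁) (zT_u)(dx₁)` of observing `y`. -/
def obsProb (T : X → U → Measure X) (Q : X → Y → ℝ) (z : Measure X) (u : U) (y : Y) : ℝ :=
  ∫ x, Q x y ∂(beliefPush T z u)

/-- Bayes update `F(z,u,y)` of the belief `z` after applying `u` and observing `y`. -/
def bayes (T : X → U → Measure X) (Q : X → Y → ℝ) (z : Measure X) (u : U) (y : Y) :
    Measure X :=
  (ENNReal.ofReal (obsProb T Q z u y))⁻¹ •
    ((beliefPush T z u).withDensity fun x => ENNReal.ofReal (Q x y))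

/-- Integral of a function `f` on beliefs against the belief transition kernel
`η(·|z,u) = Σ_{y : P(y|z,u) > 0} P(y|z,u) δ_{F(z,u,y)}`. -/
def etaInt (T : X → U → Measure X) (Q : X → Y → ℝ) (f : Measure X → ℝ)
    (z : Measure X) (u : U) : ℝ :=
  ∑ y : Y, if 0 < obsProb T Q z u y then obsProb T Q z u y * f (bayes T Q z u y) else 0

/-- Bounded-Lipschitz distance (with respect to a pseudometric `ρ` on beliefs)
between `η(·|z,u)` and `η(·|z',u)`. -/
def etaBLDist (T : X → U → Measure X) (Q : X → Y → ℝ)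
    (ρ : Measure X → Measure X → ℝ) (z z' : Measure X) (u : U) : ℝ :=
  sSup {r | ∃ f : Measure X → ℝ, blNormLE ρ f 1 ∧
    r = |etaInt T Q f z u - etaInt T Q f z' u|}

/-- The pseudometric `ρ(μ,ν) = Σ_{m ≥ 1} 2^{-(m+1)} |∫ f_m dμ - ∫ f_m dν|` on beliefs
induced by the sequence of test functions `fs` (with `fs k` playing the role of `f_{k+1}`). -/
def rhoSeq (fs : ℕ → X → ℝ) (μ ν : Measure X) : ℝ :=
  ∑' k : ℕ, (2 : ℝ)⁻¹ ^ (k + 2) * |∫ x, fs k x ∂μ - ∫ x, fs k x ∂ν|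

/-- Dobrushin coefficient of an observation channel `Q` into a finite set. -/
def dobrushinObs (Q : X → Y → ℝ) : ℝ :=
  ⨅ p : X × X, ∑ y : Y, min (Q p.1 y) (Q p.2 y)

/-- Dobrushin coefficient of a Markov kernel `K`, via finite measurable partitions. -/
def dobrushinKernel (K : X → Measure X) : ℝ :=
  sInf {r | ∃ (x x' : X) (n : ℕ) (A : Fin n → Set X),
    (∀ i, MeasurableSet (A i)) ∧ Pairwise (Function.onFun Disjoint A) ∧
    (⋃ i, A i) = Set.univ ∧
    r = ∑ i, min ((K x (A i)).toReal) ((K x' (A i)).toReal)}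

/-- `δ̃(T) = inf_u δ(T(·|·,u))`. -/
def dobrushinTrans (T : X → U → Measure X) : ℝ :=
  ⨅ u : U, dobrushinKernel fun x => T x u

end

/-!
Write `ν = zT_u` and `ν' = z'T_u`. The weights `P(y|z,u)` of `η(·|z,u)` are the integrals of
`Q(y|·)` against `ν`, and the `ρ`-coordinates of the Bayes updates are the ratios
`∫ Q(y|·) f_k dν / P(y|z,u)`. For a test function with `‖f‖_BL ≤ 1` the difference of the
`η`-integrals is therefore at most `∑_y |P - P'| + ∑_y P' ρ(F, F')`, and since
`∑_y |Q(y|x) g(x)| ≤ 1` whenever `|g| ≤ 1`, each of the two sums is at most `‖ν - ν'‖_TV`.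
Dobrushin's contraction argument (via a Hahn decomposition of `T(·|x,u) - T(·|x',u)`) gives
`‖ν - ν'‖_TV ≤ (1 - δ̃(T)) ‖z - z'‖_TV`, and the factor `3 - 2δ(Q) ≥ 1` only weakens the bound.
-/

open ProbabilityTheory Finset

lemma abs_mul_sub_mul_le {S : Type*} {d : S → S → ℝ} {f : S → ℝ} {a b : ℝ}
    (hfa : ∀ s, |f s| ≤ a) (hfb : ∀ s s', |f s - f s'| ≤ b * d s s') (p : ℝ) {p' : ℝ}
    (hp' : 0 ≤ p') (s s' : S) :
    |p * f s - p' * f s'| ≤ a * |p - p'| + b * (p' * d s s') := calc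
  |p * f s - p' * f s'| = |(p - p') * f s + p' * (f s - f s')| := by ring_nf
  _ ≤ |p - p'| * |f s| + p' * |f s - f s'| := by
      rw [← abs_mul, ← abs_of_nonneg hp', ← abs_mul, abs_of_nonneg hp']
      exact abs_add_le _ _
  _ ≤ |p - p'| * a + p' * (b * d s s') := by gcongr; exacts [hfa s, hfb s s']
  _ = a * |p - p'| + b * (p' * d s s') := by ring

/-- The `0 / 0 = 0` convention keeps this true when `P` or `P'` vanishes. -/
lemma mul_abs_div_sub_div_le {P P' I I' : ℝ} (hP : 0 ≤ P) (hP' : 0 ≤ P') (hI : |I| ≤ P) :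
    P' * |I / P - I' / P'| ≤ |I - I'| + |P - P'| := by
  rcases hP'.eq_or_lt with rfl | hP'
  · simp only [zero_mul]; positivity
  rcases hP.eq_or_lt with rfl | hP
  · obtain rfl : I = 0 := abs_nonpos_iff.1 hI
    rw [div_zero, zero_sub, abs_neg, abs_div, abs_of_pos hP', mul_div_cancel₀ _ hP'.ne']
    simp
  have hIP : |I / P| ≤ 1 := by rwa [abs_div, abs_of_pos hP, div_le_one hP]
  calc P' * |I / P - I' / P'| = |(I - I') + I / P * (P' - P)| := by
        rw [← abs_of_pos hP', ← abs_mul, abs_of_pos hP']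
        congr 1
        field_simp
        ring
    _ ≤ |I - I'| + |I / P| * |P' - P| := by rw [← abs_mul]; exact abs_add_le _ _
    _ ≤ |I - I'| + |P - P'| := by
        rw [abs_sub_comm P' P]
        gcongr
        exact mul_le_of_le_one_left (abs_nonneg _) hIP

section TotalVariation

variable {X : Type*} [MeasurableSpace X] {μ ν : Measure X}

lemma abs_integral_le_of_abs_le [IsProbabilityMeasure μ] {f : X → ℝ} {C : ℝ}
    (hf : ∀ x, |f x| ≤ C) : |∫ x, f x ∂μ| ≤ C := by
  simpa using norm_integral_le_of_norm_le_const (μ := μ)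
    (Filter.Eventually.of_forall (p := fun x => ‖f x‖ ≤ C) hf)

lemma integrable_of_abs_le [IsFiniteMeasure μ] {f : X → ℝ} (hm : Measurable f) {C : ℝ}
    (hf : ∀ x, |f x| ≤ C) : Integrable f μ :=
  .of_bound hm.aestronglyMeasurable C (Filter.Eventually.of_forall fun x => (hf x : ‖f x‖ ≤ C))

lemma tvDist_nonneg (μ ν : Measure X) : 0 ≤ tvDist μ ν :=
  Real.sSup_nonneg (by rintro _ ⟨f, -, -, rfl⟩; positivity)

lemma abs_integral_sub_le_tvDist [IsProbabilityMeasure μ] [IsProbabilityMeasure ν]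
    {f : X → ℝ} (hm : Measurable f) (hf : ∀ x, |f x| ≤ 1) :
    |∫ x, f x ∂μ - ∫ x, f x ∂ν| ≤ tvDist μ ν := by
  refine le_csSup ⟨2, ?_⟩ ⟨f, hm, hf, rfl⟩
  rintro _ ⟨g, -, hg, rfl⟩
  linarith [abs_sub (∫ x, g x ∂μ) (∫ x, g x ∂ν), abs_integral_le_of_abs_le (μ := μ) hg,
    abs_integral_le_of_abs_le (μ := ν) hg]

lemma abs_integral_sub_le_mul_tvDist [IsProbabilityMeasure μ] [IsProbabilityMeasure ν]
    {f : X → ℝ} (hm : Measurable f) {c : ℝ} (hf : ∀ x, |f x| ≤ c) :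
    |∫ x, f x ∂μ - ∫ x, f x ∂ν| ≤ c * tvDist μ ν := by
  obtain ⟨x₀⟩ := nonempty_of_isProbabilityMeasure μ
  rcases ((abs_nonneg _).trans (hf x₀)).eq_or_lt with rfl | hc
  · have hf0 : f = 0 := funext fun x => abs_nonpos_iff.1 (hf x)
    simp [hf0]
  · have key := abs_integral_sub_le_tvDist (μ := μ) (ν := ν) (hm.div_const c) fun x => by
      rw [abs_div, abs_of_pos hc, div_le_one hc]
      exact hf x
    rw [integral_div, integral_div, ← sub_div, abs_div, abs_of_pos hc, div_le_iff₀ hc] at key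
    linarith

/-- Centred at `⨅ x, g x + c`, the function `g` is bounded by `c`. -/
lemma abs_integral_sub_le_of_oscillation [IsProbabilityMeasure μ] [IsProbabilityMeasure ν]
    {g : X → ℝ} (hm : Measurable g) {C : ℝ} (hb : ∀ x, |g x| ≤ C) {c : ℝ}
    (hosc : ∀ x x', g x - g x' ≤ 2 * c) :
    |∫ x, g x ∂μ - ∫ x, g x ∂ν| ≤ c * tvDist μ ν := by
  have := nonempty_of_isProbabilityMeasure μ
  have hbdd : BddBelow (Set.range g) := ⟨-C, by rintro _ ⟨x, rfl⟩; exact (abs_le.1 (hb x)).1⟩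
  set m := ⨅ x, g x
  have hcentred : ∀ x, |g x - (m + c)| ≤ c := fun x => by
    have hlow : m ≤ g x := ciInf_le hbdd x
    have hhigh : g x - 2 * c ≤ m := le_ciInf fun x' => by linarith [hosc x x']
    rw [abs_le]
    constructor <;> linarith
  have hint : ∀ ξ : Measure X, IsProbabilityMeasure ξ →
      ∫ x, (g x - (m + c)) ∂ξ = ∫ x, g x ∂ξ - (m + c) := fun ξ _ => by
    rw [integral_sub (integrable_of_abs_le hm hb) (integrable_const _), integral_const]
    simp
  have := abs_integral_sub_le_mul_tvDist (μ := μ) (ν := ν) (f := fun x => g x - (m + c))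
    (hm.sub measurable_const) hcentred
  rwa [hint μ inferInstance, hint ν inferInstance, sub_sub_sub_cancel_right] at this

/-- Testing against the signs of the differences turns a sum of differences into one. -/
lemma sum_abs_integral_sub_le_tvDist {ι : Type*} [Fintype ι] [IsProbabilityMeasure μ]
    [IsProbabilityMeasure ν] {h : ι → X → ℝ} (hm : ∀ i, Measurable (h i))
    (hsum : ∀ x, ∑ i, |h i x| ≤ 1) :
    ∑ i, |∫ x, h i x ∂μ - ∫ x, h i x ∂ν| ≤ tvDist μ ν := by
  set s : ι → ℝ := fun i => SignType.sign (∫ x, h i x ∂μ - ∫ x, h i x ∂ν)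
  have hs : ∀ i, |s i| ≤ 1 := fun i => by
    simp only [s]
    generalize SignType.sign (∫ x, h i x ∂μ - ∫ x, h i x ∂ν) = σ
    cases σ <;> simp
  set H : X → ℝ := fun x => ∑ i, s i * h i x
  have hHm : Measurable H := Finset.measurable_sum _ fun i _ => (hm i).const_mul (s i)
  have hH : ∀ x, |H x| ≤ 1 := fun x => calc
    |H x| ≤ ∑ i, |s i * h i x| := abs_sum_le_sum_abs _ _
    _ ≤ ∑ i, |h i x| := sum_le_sum fun i _ => by
        rw [abs_mul]; exact mul_le_of_le_one_left (abs_nonneg _) (hs i)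
    _ ≤ 1 := hsum x
  have hint : ∀ ξ : Measure X, IsProbabilityMeasure ξ →
      ∫ x, H x ∂ξ = ∑ i, s i * ∫ x, h i x ∂ξ := fun ξ _ => by
    rw [integral_finsetSum _ fun i _ => ((integrable_of_abs_le (hm i) fun x =>
      (single_le_sum (fun j _ => abs_nonneg (h j x)) (mem_univ i)).trans (hsum x)).const_mul _)]
    simp only [integral_const_mul]
  calc ∑ i, |∫ x, h i x ∂μ - ∫ x, h i x ∂ν|
      = ∫ x, H x ∂μ - ∫ x, H x ∂ν := by
        rw [hint μ inferInstance, hint ν inferInstance, ← sum_sub_distrib]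
        exact sum_congr rfl fun i _ => by rw [← mul_sub, sign_mul_self]
    _ ≤ tvDist μ ν := (le_abs_self _).trans (abs_integral_sub_le_tvDist hHm hH)

end TotalVariation

section Dobrushin

variable {X : Type*} [MeasurableSpace X]

lemma integral_sub_integral_le_of_le {α β : Measure X} [IsFiniteMeasure α] (hβα : β ≤ α)
    {f : X → ℝ} (hm : Measurable f) (hf : ∀ x, |f x| ≤ 1) :
    ∫ x, f x ∂α - ∫ x, f x ∂β ≤ α.real Set.univ - β.real Set.univ := by
  have := isFiniteMeasure_of_le α hβα
  have := isFiniteMeasure_of_le α (Measure.sub_le (μ := α) (ν := β))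
  have hsplit : ∫ x, f x ∂α = ∫ x, f x ∂(α - β) + ∫ x, f x ∂β := by
    conv_lhs => rw [← Measure.sub_add_cancel_of_le hβα]
    exact integral_add_measure (integrable_of_abs_le hm hf) (integrable_of_abs_le hm hf)
  have hbound : ∫ x, f x ∂(α - β) ≤ (α - β).real Set.univ := by
    simpa using (le_abs_self _).trans (norm_integral_le_of_norm_le_const (μ := α - β)
      (Filter.Eventually.of_forall (p := fun x => ‖f x‖ ≤ 1) hf))
  rw [measureReal_def, Measure.sub_apply MeasurableSet.univ hβα,
    ENNReal.toReal_sub_of_le (hβα Set.univ) (measure_ne_top α _)] at hbound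
  rw [measureReal_def, measureReal_def]
  linarith

lemma dobrushinKernel_le_of_measurableSet (K : X → Measure X) (x x' : X) {s : Set X}
    (hs : MeasurableSet s) :
    dobrushinKernel K ≤ min ((K x).real s) ((K x').real s)
      + min ((K x).real sᶜ) ((K x').real sᶜ) := by
  refine csInf_le ⟨0, ?_⟩ ⟨x, x', 2, ![s, sᶜ], ?_, ?_, ?_, ?_⟩
  · rintro _ ⟨x, x', n, A, -, -, -, rfl⟩
    exact sum_nonneg fun i _ => le_min ENNReal.toReal_nonneg ENNReal.toReal_nonneg
  · intro i
    fin_cases i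
    exacts [hs, hs.compl]
  · intro i j hij
    fin_cases i <;> fin_cases j <;> simp_all [Function.onFun]
    exacts [disjoint_compl_right, disjoint_compl_left]
  · ext ξ
    simp [Fin.exists_fin_two, em]
  · simp [Fin.sum_univ_two, measureReal_def]

lemma dobrushinKernel_le_one [Nonempty X] (K : X → Measure X)
    [∀ x, IsProbabilityMeasure (K x)] : dobrushinKernel K ≤ 1 := by
  inhabit X
  simpa using dobrushinKernel_le_of_measurableSet K default default MeasurableSet.univ

/-- Split both integrals along a Hahn set of `K x - K x'`. -/
lemma integral_sub_integral_le_dobrushinKernel (K : X → Measure X)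
    [∀ x, IsProbabilityMeasure (K x)] {f : X → ℝ} (hm : Measurable f) (hf : ∀ x, |f x| ≤ 1)
    (x x' : X) : ∫ ξ, f ξ ∂K x - ∫ ξ, f ξ ∂K x' ≤ 2 * (1 - dobrushinKernel K) := by
  obtain ⟨s, hs, hle, hge⟩ := exists_isHahnDecomposition (K x') (K x)
  have hpos := integral_sub_integral_le_of_le hle hm hf
  have hneg := integral_sub_integral_le_of_le hge (f := fun ξ => -f ξ) hm.neg
    fun ξ => by rw [abs_neg]; exact hf ξ
  simp only [measureReal_restrict_apply_univ, integral_neg] at hpos hneg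
  have hx := integral_add_compl hs (integrable_of_abs_le (μ := K x) hm hf)
  have hx' := integral_add_compl hs (integrable_of_abs_le (μ := K x') hm hf)
  have hmass := measureReal_add_measureReal_compl (μ := K x) hs
  have hmass' := measureReal_add_measureReal_compl (μ := K x') hs
  have hδ := dobrushinKernel_le_of_measurableSet K x x' hs
  simp only [probReal_univ] at hmass hmass'
  linarith [min_le_right ((K x).real s) ((K x').real s),
    min_le_left ((K x).real sᶜ) ((K x').real sᶜ)]

lemma integral_comp_kernel {κ : Kernel X X} [IsFiniteKernel κ] {μ : Measure X}
    [IsFiniteMeasure μ] {f : X → ℝ} (hf : Integrable f (κ ∘ₘ μ)) :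
    ∫ x, f x ∂(κ ∘ₘ μ) = ∫ x, ∫ y, f y ∂κ x ∂μ := by
  rw [Measure.comp_eq_comp_const_apply] at hf ⊢
  rw [Kernel.integral_comp hf]
  simp [Kernel.const_apply]

lemma dobrushinTrans_le {U : Type*} (T : X → U → Measure X) (u : U) :
    dobrushinTrans T ≤ dobrushinKernel fun x => T x u :=
  ciInf_le ⟨0, by rintro _ ⟨u', rfl⟩; exact Real.sInf_nonneg (by
    rintro _ ⟨x, x', n, A, -, -, -, rfl⟩
    exact sum_nonneg fun i _ => le_min ENNReal.toReal_nonneg ENNReal.toReal_nonneg)⟩ u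

theorem tvDist_comp_le (κ : Kernel X X) [IsMarkovKernel κ] (μ ν : Measure X)
    [IsProbabilityMeasure μ] [IsProbabilityMeasure ν] :
    tvDist (κ ∘ₘ μ) (κ ∘ₘ ν) ≤ (1 - dobrushinKernel κ) * tvDist μ ν := by
  have := nonempty_of_isProbabilityMeasure μ
  have hδ : dobrushinKernel κ ≤ 1 := dobrushinKernel_le_one κ
  refine Real.sSup_le ?_ (mul_nonneg (by linarith) (tvDist_nonneg μ ν))
  rintro _ ⟨f, hm, hf, rfl⟩
  have hint : ∀ ξ : Measure X, IsProbabilityMeasure ξ →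
      ∫ x, f x ∂(κ ∘ₘ ξ) = ∫ x, ∫ y, f y ∂κ x ∂ξ := fun ξ _ =>
    integral_comp_kernel (integrable_of_abs_le hm hf)
  rw [hint μ inferInstance, hint ν inferInstance]
  exact abs_integral_sub_le_of_oscillation
    (hm.stronglyMeasurable.integral_kernel (κ := κ)).measurable
    (fun x => abs_integral_le_of_abs_le hf)
    (integral_sub_integral_le_dobrushinKernel κ hm hf)

end Dobrushin

section BeliefKernel

variable {X : Type*} [MeasurableSpace X]

/-- The case `P = 0` is included: both sides are then `0` (`⊤.toReal = 0` and `x / 0 = 0`). -/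
lemma integral_inv_smul_withDensity_ofReal (ν : Measure X) {q : X → ℝ} (hqm : Measurable q)
    (hq : ∀ x, 0 ≤ q x) {P : ℝ} (hP : 0 ≤ P) (g : X → ℝ) :
    ∫ x, g x ∂((ENNReal.ofReal P)⁻¹ • ν.withDensity fun x => ENNReal.ofReal (q x))
      = (∫ x, q x * g x ∂ν) / P := by
  rw [integral_smul_measure, ENNReal.toReal_inv, ENNReal.toReal_ofReal hP, smul_eq_mul,
    inv_mul_eq_div]
  congr 1
  refine (integral_withDensity_eq_integral_smul hqm.real_toNNReal g).trans
    (integral_congr_ae (Filter.Eventually.of_forall fun x => ?_))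
  simp [NNReal.smul_def, Real.coe_toNNReal _ (hq x)]

/-- The weights `2⁻¹ ^ (k + 2)` of `rhoSeq` sum to `1 / 2`. -/
lemma sum_mul_rhoSeq_le {ι : Type*} [Fintype ι] (fs : ℕ → X → ℝ) (μ ν : ι → Measure X)
    {c : ι → ℝ} (hc : ∀ i, 0 ≤ c i) {D : ℝ}
    (hD : ∀ k, ∑ i, c i * |∫ x, fs k x ∂μ i - ∫ x, fs k x ∂ν i| ≤ D) :
    ∑ i, c i * rhoSeq fs (μ i) (ν i) ≤ D / 2 := by
  set w : ℕ → ℝ := fun k => (2 : ℝ)⁻¹ ^ (k + 2)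
  set Δ : ι → ℕ → ℝ := fun i k => |∫ x, fs k x ∂μ i - ∫ x, fs k x ∂ν i|
  have hw : HasSum w (1 / 2) := by
    have hw_eq : w = fun k => (1 / 2 : ℝ) ^ k * 4⁻¹ :=
      funext fun k => by simp only [w, pow_add]; norm_num
    have h := hasSum_geometric_two.mul_right (4⁻¹ : ℝ)
    rwa [show (2 : ℝ) * 4⁻¹ = 1 / 2 by norm_num, ← hw_eq] at h
  have hw0 : ∀ k, 0 ≤ w k := fun k => by positivity
  have hsummable : ∀ i, Summable fun k => w k * (c i * Δ i k) := fun i =>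
    (hw.summable.mul_right D).of_nonneg_of_le
      (fun k => mul_nonneg (hw0 k) (mul_nonneg (hc i) (abs_nonneg _)))
      (fun k => mul_le_mul_of_nonneg_left ((single_le_sum (f := fun j => c j * Δ j k)
        (fun j _ => mul_nonneg (hc j) (abs_nonneg _)) (mem_univ i)).trans (hD k)) (hw0 k))
  calc ∑ i, c i * rhoSeq fs (μ i) (ν i) = ∑ i, ∑' k, w k * (c i * Δ i k) :=
        sum_congr rfl fun i _ => by
          simp only [rhoSeq, ← tsum_mul_left]
          exact tsum_congr fun k => by ring
    _ = ∑' k, w k * ∑ i, c i * Δ i k := by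
        rw [← Summable.tsum_finsetSum fun i _ => hsummable i]
        simp only [mul_sum]
    _ ≤ ∑' k, w k * D :=
        Summable.tsum_le_tsum (fun k => mul_le_mul_of_nonneg_left (hD k) (hw0 k))
          ((summable_sum (s := univ) fun i _ => hsummable i).congr fun k => by simp only [mul_sum])
          (hw.summable.mul_right D)
    _ = D / 2 := by rw [tsum_mul_right, hw.tsum_eq]; ring

variable {Y U : Type*} {T : X → U → Measure X} {Q : X → Y → ℝ}

lemma obsProb_nonneg (hQ_nonneg : ∀ x y, 0 ≤ Q x y) (z : Measure X) (u : U) (y : Y) :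
    0 ≤ obsProb T Q z u y :=
  integral_nonneg fun x => hQ_nonneg x y

lemma integral_bayes (hQ_meas : ∀ y, Measurable fun x => Q x y)
    (hQ_nonneg : ∀ x y, 0 ≤ Q x y) (z : Measure X) (u : U) (y : Y) (g : X → ℝ) :
    ∫ x, g x ∂bayes T Q z u y
      = (∫ x, Q x y * g x ∂beliefPush T z u) / obsProb T Q z u y :=
  integral_inv_smul_withDensity_ofReal _ (hQ_meas y) (fun x => hQ_nonneg x y)
    (obsProb_nonneg hQ_nonneg z u y) g

variable [Fintype Y]

lemma etaInt_eq_sum (hQ_nonneg : ∀ x y, 0 ≤ Q x y) (f : Measure X → ℝ) (z : Measure X)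
    (u : U) : etaInt T Q f z u = ∑ y, obsProb T Q z u y * f (bayes T Q z u y) :=
  sum_congr rfl fun y _ => by
    split_ifs with hpos
    · rfl
    · rw [(not_lt.1 hpos).antisymm (obsProb_nonneg hQ_nonneg z u y), zero_mul]

variable (T) (hQ_meas : ∀ y, Measurable fun x => Q x y) (hQ_nonneg : ∀ x y, 0 ≤ Q x y)
  (hQ_sum : ∀ x, ∑ y, Q x y = 1) (z z' : Measure X) (u : U)
  [IsProbabilityMeasure (beliefPush T z u)] [IsProbabilityMeasure (beliefPush T z' u)]
include hQ_meas hQ_nonneg hQ_sum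

lemma sum_abs_integral_mul_sub_le_tvDist {g : X → ℝ} (hg_meas : Measurable g)
    (hg_bdd : ∀ x, |g x| ≤ 1) :
    ∑ y, |∫ x, Q x y * g x ∂beliefPush T z u - ∫ x, Q x y * g x ∂beliefPush T z' u|
      ≤ tvDist (beliefPush T z u) (beliefPush T z' u) :=
  sum_abs_integral_sub_le_tvDist (fun y => (hQ_meas y).mul hg_meas) fun x => calc
    ∑ y, |Q x y * g x| ≤ ∑ y, Q x y := sum_le_sum fun y _ => by
        rw [abs_mul, abs_of_nonneg (hQ_nonneg x y)]
        exact mul_le_of_le_one_right (hQ_nonneg x y) (hg_bdd x)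
    _ = 1 := hQ_sum x

lemma sum_abs_obsProb_sub_le_tvDist :
    ∑ y, |obsProb T Q z u y - obsProb T Q z' u y|
      ≤ tvDist (beliefPush T z u) (beliefPush T z' u) := by
  simpa [obsProb] using sum_abs_integral_mul_sub_le_tvDist T hQ_meas hQ_nonneg hQ_sum z z' u
    (g := fun _ => 1) measurable_const fun _ => abs_one.le

lemma sum_obsProb_mul_rhoSeq_bayes_le {fs : ℕ → X → ℝ} (hfs_meas : ∀ k, Measurable (fs k))
    (hfs_bdd : ∀ k x, |fs k x| ≤ 1) :
    ∑ y, obsProb T Q z' u y * rhoSeq fs (bayes T Q z u y) (bayes T Q z' u y)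
      ≤ tvDist (beliefPush T z u) (beliefPush T z' u) := by
  set ν := beliefPush T z u
  set ν' := beliefPush T z' u
  have hI_le : ∀ k y, |∫ x, Q x y * fs k x ∂ν| ≤ obsProb T Q z u y := fun k y =>
    norm_integral_le_of_norm_le (μ := ν) (f := fun x => Q x y * fs k x)
      (integrable_of_abs_le (hQ_meas y) (C := 1) fun x => by
        rw [abs_of_nonneg (hQ_nonneg x y), ← hQ_sum x]
        exact single_le_sum (fun y _ => hQ_nonneg x y) (mem_univ y))
      (Filter.Eventually.of_forall fun x => by
        rw [Real.norm_eq_abs, abs_mul, abs_of_nonneg (hQ_nonneg x y)]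
        exact mul_le_of_le_one_right (hQ_nonneg x y) (hfs_bdd k x))
  have := sum_mul_rhoSeq_le fs (bayes T Q z u) (bayes T Q z' u)
    (obsProb_nonneg hQ_nonneg z' u) (D := 2 * tvDist ν ν') fun k => by
      simp only [integral_bayes hQ_meas hQ_nonneg]
      calc _ ≤ ∑ y, (|∫ x, Q x y * fs k x ∂ν - ∫ x, Q x y * fs k x ∂ν'|
              + |obsProb T Q z u y - obsProb T Q z' u y|) :=
            sum_le_sum fun y _ => mul_abs_div_sub_div_le (obsProb_nonneg hQ_nonneg z u y)
              (obsProb_nonneg hQ_nonneg z' u y) (hI_le k y)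
        _ ≤ 2 * tvDist ν ν' := by
            rw [sum_add_distrib]
            linarith [sum_abs_integral_mul_sub_le_tvDist T hQ_meas hQ_nonneg hQ_sum z z' u
              (hfs_meas k) (hfs_bdd k),
              sum_abs_obsProb_sub_le_tvDist T hQ_meas hQ_nonneg hQ_sum z z' u]
  linarith

theorem etaBLDist_le_tvDist_beliefPush {fs : ℕ → X → ℝ} (hfs_meas : ∀ k, Measurable (fs k))
    (hfs_bdd : ∀ k x, |fs k x| ≤ 1) :
    etaBLDist T Q (rhoSeq fs) z z' u ≤ tvDist (beliefPush T z u) (beliefPush T z' u) := by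
  have hP_sum := sum_abs_obsProb_sub_le_tvDist T hQ_meas hQ_nonneg hQ_sum z z' u
  have hρ_sum :=
    sum_obsProb_mul_rhoSeq_bayes_le T hQ_meas hQ_nonneg hQ_sum z z' u hfs_meas hfs_bdd
  set t := tvDist (beliefPush T z u) (beliefPush T z' u)
  set P := obsProb T Q z u
  set P' := obsProb T Q z' u
  refine Real.sSup_le ?_ (tvDist_nonneg _ _)
  rintro _ ⟨f, ⟨a, b, ha, hb, hab, hfa, hfb⟩, rfl⟩
  rw [etaInt_eq_sum hQ_nonneg, etaInt_eq_sum hQ_nonneg, ← sum_sub_distrib]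
  calc _ ≤ ∑ y, (a * |P y - P' y|
          + b * (P' y * rhoSeq fs (bayes T Q z u y) (bayes T Q z' u y))) :=
        (abs_sum_le_sum_abs _ _).trans (sum_le_sum fun y _ =>
          abs_mul_sub_mul_le hfa hfb _ (obsProb_nonneg hQ_nonneg z' u y) _ _)
    _ = a * ∑ y, |P y - P' y|
          + b * ∑ y, P' y * rhoSeq fs (bayes T Q z u y) (bayes T Q z' u y) := by
        rw [sum_add_distrib, mul_sum, mul_sum]
    _ ≤ a * t + b * t := by gcongr
    _ ≤ t := by nlinarith [tvDist_nonneg (beliefPush T z u) (beliefPush T z' u)]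

end BeliefKernel

lemma dobrushinObs_le_one {X Y : Type*} [Nonempty X] [Fintype Y] {Q : X → Y → ℝ}
    (hQ_nonneg : ∀ x y, 0 ≤ Q x y) (hQ_sum : ∀ x, ∑ y, Q x y = 1) : dobrushinObs Q ≤ 1 := by
  inhabit X
  refine ciInf_le_of_le ⟨0, ?_⟩ (default, default) (by simp [hQ_sum])
  rintro _ ⟨p, rfl⟩
  exact sum_nonneg fun y _ => le_min (hQ_nonneg _ _) (hQ_nonneg _ _)

theorem statement3_general {m : ℕ} (Xs : Set (EuclideanSpace ℝ (Fin m)))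
    {Y U : Type*} [Fintype Y]
    (T : Xs → U → MeasureTheory.Measure Xs)
    (hT_meas : ∀ u : U, Measurable fun x : Xs => T x u)
    (hT_prob : ∀ (x : Xs) (u : U), MeasureTheory.IsProbabilityMeasure (T x u))
    (Q : Xs → Y → ℝ)
    (hQ_meas : ∀ y : Y, Measurable fun x : Xs => Q x y)
    (hQ_nonneg : ∀ (x : Xs) (y : Y), 0 ≤ Q x y)
    (hQ_sum : ∀ x : Xs, ∑ y : Y, Q x y = 1)
    (fs : ℕ → Xs → ℝ)
    (hfs_meas : ∀ k, Measurable (fs k))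
    (hfs_bdd : ∀ (k : ℕ) (x : Xs), |fs k x| ≤ 1)
    (z z' : MeasureTheory.Measure Xs)
    (hz : MeasureTheory.IsProbabilityMeasure z)
    (hz' : MeasureTheory.IsProbabilityMeasure z')
    (u : U) :
    etaBLDist T Q (rhoSeq fs) z z' u ≤
      (3 - 2 * dobrushinObs Q) * (1 - dobrushinTrans T) * tvDist z z' := by
  have := nonempty_of_isProbabilityMeasure z
  let κ : Kernel Xs Xs := ⟨fun x => T x u, hT_meas u⟩
  have : IsMarkovKernel κ := ⟨fun x => hT_prob x u⟩
  have : IsProbabilityMeasure (beliefPush T z u) :=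
    inferInstanceAs (IsProbabilityMeasure (κ ∘ₘ z))
  have : IsProbabilityMeasure (beliefPush T z' u) :=
    inferInstanceAs (IsProbabilityMeasure (κ ∘ₘ z'))
  have hδT : dobrushinTrans T ≤ 1 := (dobrushinTrans_le T u).trans (dobrushinKernel_le_one κ)
  calc etaBLDist T Q (rhoSeq fs) z z' u
      ≤ tvDist (κ ∘ₘ z) (κ ∘ₘ z') :=
        etaBLDist_le_tvDist_beliefPush T hQ_meas hQ_nonneg hQ_sum z z' u hfs_meas hfs_bdd
    _ ≤ (1 - dobrushinKernel κ) * tvDist z z' := tvDist_comp_le κ z z'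
    _ ≤ (1 - dobrushinTrans T) * tvDist z z' := by
        gcongr
        · exact tvDist_nonneg z z'
        · exact dobrushinTrans_le T u
    _ ≤ (3 - 2 * dobrushinObs Q) * (1 - dobrushinTrans T) * tvDist z z' := by
        rw [mul_assoc]
        refine le_mul_of_one_le_left (mul_nonneg (by linarith) (tvDist_nonneg z z')) ?_
        linarith [dobrushinObs_le_one hQ_nonneg hQ_sum]

theorem statement3 {m : ℕ} (Xs : Set (EuclideanSpace ℝ (Fin m))) (hXs : MeasurableSet Xs)
    {Y U : Type*} [Fintype Y] [Fintype U]
    (T : Xs → U → MeasureTheory.Measure Xs)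
    (hT_meas : ∀ u : U, Measurable fun x : Xs => T x u)
    (hT_prob : ∀ (x : Xs) (u : U), MeasureTheory.IsProbabilityMeasure (T x u))
    (Q : Xs → Y → ℝ)
    (hQ_meas : ∀ y : Y, Measurable fun x : Xs => Q x y)
    (hQ_nonneg : ∀ (x : Xs) (y : Y), 0 ≤ Q x y)
    (hQ_sum : ∀ x : Xs, ∑ y : Y, Q x y = 1)
    (fs : ℕ → Xs → ℝ)
    (hfs_meas : ∀ k, Measurable (fs k))
    (hfs_bdd : ∀ (k : ℕ) (x : Xs), |fs k x| ≤ 1)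
    (z z' : MeasureTheory.Measure Xs)
    (hz : MeasureTheory.IsProbabilityMeasure z)
    (hz' : MeasureTheory.IsProbabilityMeasure z')
    (u : U) :
    etaBLDist T Q (rhoSeq fs) z z' u ≤
      (3 - 2 * dobrushinObs Q) * (1 - dobrushinTrans T) * tvDist z z' :=
  statement3_general Xs T hT_meas hT_prob Q hQ_meas hQ_nonneg hQ_sum fs hfs_meas hfs_bdd z z' hz hz'
    u
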